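/- arXiv:1105.4121 — 3 statements merged into one kernel-verified Lean document; each statement's English description precedes it below -/
import Mathlib

section
/- Let G be a group acting by ring automorphisms on a ring R in which every two-sided ideal A contains a finite product of prime ideals each of which contains A. Then every G-prime ideal I of R is of the form P:G = ⋂_{g∈G} g•P for some prime ideal P of R containing I. -/
open Pointwise

/-- A two-sided ideal of a (possibly noncommutative) ring, as a subset. -/
structure IsTwoSidedIdealSet (R : Type*) [Ring R] (I : Set R) : Prop where
  zero_mem : (0 : R) ∈ I
  add_mem : ∀ ⦃a b : R⦄, a ∈ I → b ∈ I → a + b ∈ I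
  neg_mem : ∀ ⦃a : R⦄, a ∈ I → -a ∈ I
  mul_mem_left : ∀ (r : R) ⦃a : R⦄, a ∈ I → r * a ∈ I
  mul_mem_right : ∀ (r : R) ⦃a : R⦄, a ∈ I → a * r ∈ I

/-- A prime two-sided ideal: proper, and `A*B ⊆ P` for two-sided ideals `A, B`
implies `A ⊆ P` or `B ⊆ P`.  (Note `A*B ⊆ P` is equivalent to
`∀ a ∈ A, ∀ b ∈ B, a*b ∈ P` since `P` is closed under addition.) -/
def IsPrimeTI (R : Type*) [Ring R] (P : Set R) : Prop :=
  IsTwoSidedIdealSet R P ∧ P ≠ Set.univ ∧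
    ∀ A B : Set R, IsTwoSidedIdealSet R A → IsTwoSidedIdealSet R B →
      (∀ a ∈ A, ∀ b ∈ B, a * b ∈ P) → A ⊆ P ∨ B ⊆ P

/-- A `G`-prime ideal: a proper `G`-stable two-sided ideal `I` such that
`A*B ⊆ I` for `G`-stable two-sided ideals `A, B` implies `A ⊆ I` or `B ⊆ I`. -/
def IsGPrime (G R : Type*) [Group G] [Ring R] [MulSemiringAction G R] (I : Set R) : Prop :=
  IsTwoSidedIdealSet R I ∧ I ≠ Set.univ ∧ (∀ g : G, g • I = I) ∧
    ∀ A B : Set R, IsTwoSidedIdealSet R A → IsTwoSidedIdealSet R B →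
      (∀ g : G, g • A = A) → (∀ g : G, g • B = B) →
      (∀ a ∈ A, ∀ b ∈ B, a * b ∈ I) → A ⊆ I ∨ B ⊆ I

/-!
Apply the hypothesis to `I` itself: `P₁⋯Pₙ ⊆ I` with primes `Pᵢ ⊇ I`. The cores `Qᵢ = Pᵢ:G` are
`G`-stable ideals with `I ⊆ Qᵢ ⊆ Pᵢ`, so `Q₁⋯Qₙ ⊆ I`. Rather than forming product ideals, peel off
one factor at a time: `Q₁` and the right colon `(I : Q₁)` are `G`-stable ideals with product in `I`,
and `(I : Q₁)` contains `Q₂⋯Qₙ`. Hence `G`-primeness gives some `Qᵢ ⊆ I`, i.e. `I = Pᵢ:G`.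
-/

namespace IsTwoSidedIdealSet

variable {R : Type*} [Ring R]

theorem eq_univ_of_one_mem {I : Set R} (hI : IsTwoSidedIdealSet R I) (h1 : (1 : R) ∈ I) :
    I = Set.univ :=
  Set.eq_univ_of_forall fun r => by simpa using hI.mul_mem_left r h1

theorem preimage {S : Type*} [Ring S] (f : R →+* S) {P : Set S} (hP : IsTwoSidedIdealSet S P) :
    IsTwoSidedIdealSet R (f ⁻¹' P) where
  zero_mem := by simpa using hP.zero_mem
  add_mem _ _ ha hb := by simpa using hP.add_mem ha hb
  neg_mem _ ha := by simpa using hP.neg_mem ha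
  mul_mem_left r _ ha := by simpa using hP.mul_mem_left (f r) ha
  mul_mem_right r _ ha := by simpa using hP.mul_mem_right (f r) ha

theorem iInter {ι : Sort*} {P : ι → Set R} (hP : ∀ i, IsTwoSidedIdealSet R (P i)) :
    IsTwoSidedIdealSet R (⋂ i, P i) where
  zero_mem := Set.mem_iInter.2 fun i => (hP i).zero_mem
  add_mem _ _ ha hb := Set.mem_iInter.2 fun i =>
    (hP i).add_mem (Set.mem_iInter.1 ha i) (Set.mem_iInter.1 hb i)
  neg_mem _ ha := Set.mem_iInter.2 fun i => (hP i).neg_mem (Set.mem_iInter.1 ha i)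
  mul_mem_left r _ ha := Set.mem_iInter.2 fun i => (hP i).mul_mem_left r (Set.mem_iInter.1 ha i)
  mul_mem_right r _ ha := Set.mem_iInter.2 fun i => (hP i).mul_mem_right r (Set.mem_iInter.1 ha i)

theorem smul {G : Type*} [Group G] [MulSemiringAction G R] {P : Set R}
    (hP : IsTwoSidedIdealSet R P) (g : G) : IsTwoSidedIdealSet R (g • P) := by
  rw [← Set.preimage_smul_inv]
  exact hP.preimage (MulSemiringAction.toRingHom G R g⁻¹)

end IsTwoSidedIdealSet

section RightColon

variable {R : Type*} [Ring R]

def rightColon (I A : Set R) : Set R := {b | ∀ a ∈ A, a * b ∈ I}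

theorem IsTwoSidedIdealSet.rightColon {I A : Set R} (hI : IsTwoSidedIdealSet R I)
    (hA : ∀ a ∈ A, ∀ r, a * r ∈ A) : IsTwoSidedIdealSet R (rightColon I A) where
  zero_mem a _ := by simpa using hI.zero_mem
  add_mem _ _ hb hc a ha := by simpa [mul_add] using hI.add_mem (hb a ha) (hc a ha)
  neg_mem _ hb a ha := by simpa using hI.neg_mem (hb a ha)
  mul_mem_left r _ hb a ha := by simpa [mul_assoc] using hb (a * r) (hA a ha r)
  mul_mem_right r _ hb a ha := by simpa [mul_assoc] using hI.mul_mem_right r (hb a ha)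

theorem smul_rightColon {G : Type*} [Group G] [MulSemiringAction G R] (g : G) (I A : Set R) :
    g • rightColon I A = rightColon (g • I) (g • A) := by
  ext b
  simp only [rightColon, Set.mem_smul_set_iff_inv_smul_mem, Set.mem_ofPred_eq, smul_mul']
  exact ⟨fun h a ha => h _ ha, fun h a ha => by simpa using h (g • a) (by simpa using ha)⟩

end RightColon

section GPrime

variable {G R : Type*} [Group G] [Ring R] [MulSemiringAction G R]

theorem smul_iInter_smul (h : G) (P : Set R) : h • ⋂ g : G, g • P = ⋂ g : G, g • P := by
  simp only [Set.smul_set_iInter, smul_smul]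
  exact (mul_left_surjective h).iInter_comp (· • P)

theorem iInter_smul_subset (P : Set R) : ⋂ g : G, g • P ⊆ P := by
  simpa using Set.iInter_subset (fun g : G => g • P) 1

theorem subset_iInter_smul_of_subset {I P : Set R} (hI : ∀ g : G, g • I = I) (hIP : I ⊆ P) :
    I ⊆ ⋂ g : G, g • P :=
  Set.subset_iInter fun g => hI g ▸ Set.smul_set_mono hIP

theorem IsGPrime.exists_subset_of_prod_mem {I : Set R} (hI : IsGPrime G R I) {n : ℕ}
    (Qs : Fin n → Set R) (hQ : ∀ i, IsTwoSidedIdealSet R (Qs i))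
    (hQG : ∀ i (g : G), g • Qs i = Qs i)
    (hprod : ∀ f : Fin n → R, (∀ i, f i ∈ Qs i) → (List.ofFn f).prod ∈ I) :
    ∃ i, Qs i ⊆ I := by
  induction n with
  | zero => exact absurd (hI.1.eq_univ_of_one_mem (by simpa using hprod Fin.elim0 nofun)) hI.2.1
  | succ n ih =>
    have hB : IsTwoSidedIdealSet R (rightColon I (Qs 0)) :=
      hI.1.rightColon fun a ha r => (hQ 0).mul_mem_right r ha
    have hBG (g : G) : g • rightColon I (Qs 0) = rightColon I (Qs 0) := by
      rw [smul_rightColon, hI.2.2.1, hQG]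
    rcases hI.2.2.2 _ _ (hQ 0) hB (hQG 0) hBG fun a ha b hb => hb a ha with h0 | hBI
    · exact ⟨0, h0⟩
    · obtain ⟨i, hi⟩ := ih (fun i => Qs i.succ) (fun i => hQ i.succ) (fun i => hQG i.succ)
        fun f hf => hBI fun a ha => by
          simpa using hprod (Fin.cons a f) (Fin.cases ha hf)
      exact ⟨i.succ, hi⟩

end GPrime

/-- if every two-sided ideal `A` of `R` contains a finite product of
prime ideals each containing `A`, then every `G`-prime ideal of `R` has the form
`P:G = ⋂_{g ∈ G} g•P` for some prime ideal `P ⊇ I`. -/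
theorem gPrime_eq_iInter_smul_prime {G R : Type*} [Group G] [Ring R]
    [MulSemiringAction G R]
    (hNoeth : ∀ A : Set R, IsTwoSidedIdealSet R A →
      ∃ (n : ℕ) (Ps : Fin n → Set R), (∀ i, IsPrimeTI R (Ps i)) ∧ (∀ i, A ⊆ Ps i) ∧
        ∀ f : Fin n → R, (∀ i, f i ∈ Ps i) → (List.ofFn f).prod ∈ A)
    (I : Set R) (hI : IsGPrime G R I) :
    ∃ P : Set R, IsPrimeTI R P ∧ I ⊆ P ∧ I = ⋂ g : G, g • P := by
  obtain ⟨n, Ps, hPs, hIPs, hprod⟩ := hNoeth I hI.1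
  obtain ⟨i, hi⟩ := hI.exists_subset_of_prod_mem (fun i => ⋂ g : G, g • Ps i)
    (fun i => .iInter fun g => (hPs i).1.smul g) (fun i g => smul_iInter_smul g (Ps i))
    fun f hf => hprod f fun i => iInter_smul_subset (Ps i) (hf i)
  exact ⟨Ps i, hPs i, hIPs i, (subset_iInter_smul_of_subset hI.2.2.1 (hIPs i)).antisymm hi⟩
end

section
/- Let G be a group acting by ring automorphisms on a ring R satisfying the condition that every ideal contains a finite product of primes containing it. Then every G-prime ideal of R is semiprime (equal to its own radical, i.e., an intersection of prime ideals). -/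
open Pointwise

section Aux

variable {G R : Type*} [Group G] [Ring R] [MulSemiringAction G R]

/-- Two-sided ideals are stable under the ring automorphisms coming from `G`. -/
lemma IsTwoSidedIdealSet.smul_s2 {A : Set R} (h : IsTwoSidedIdealSet R A) (g : G) :
    IsTwoSidedIdealSet R (g • A) := by
  constructor
  · rw [Set.mem_smul_set_iff_inv_smul_mem, smul_zero]
    exact h.zero_mem
  · intro a b ha hb
    rw [Set.mem_smul_set_iff_inv_smul_mem] at ha hb ⊢
    rw [smul_add]
    exact h.add_mem ha hb
  · intro a ha
    rw [Set.mem_smul_set_iff_inv_smul_mem] at ha ⊢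
    rw [smul_neg]
    exact h.neg_mem ha
  · intro r a ha
    rw [Set.mem_smul_set_iff_inv_smul_mem] at ha ⊢
    rw [smul_mul']
    exact h.mul_mem_left _ ha
  · intro r a ha
    rw [Set.mem_smul_set_iff_inv_smul_mem] at ha ⊢
    rw [smul_mul']
    exact h.mul_mem_right _ ha

/-- Prime two-sided ideals are stable under the ring automorphisms coming from `G`. -/
lemma IsPrimeTI.smul_s2 {P : Set R} (h : IsPrimeTI R P) (g : G) :
    IsPrimeTI R (g • P) := by
  obtain ⟨hTI, hne, hpr⟩ := h
  refine ⟨hTI.smul_s2 g, ?_, ?_⟩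
  · intro hu
    apply hne
    have := congrArg (fun s => g⁻¹ • s) hu
    simpa [inv_smul_smul, Set.smul_set_univ] using this
  · intro A B hA hB hprod
    have key : ∀ a ∈ g⁻¹ • A, ∀ b ∈ g⁻¹ • B, a * b ∈ P := by
      intro a ha b hb
      rw [Set.mem_smul_set_iff_inv_smul_mem, inv_inv] at ha hb
      have : g • a * g • b ∈ g • P := hprod _ ha _ hb
      rw [← smul_mul'] at this
      rw [Set.mem_smul_set_iff_inv_smul_mem, inv_smul_smul] at this
      exact this
    rcases hpr (g⁻¹ • A) (g⁻¹ • B) (hA.smul_s2 g⁻¹) (hB.smul_s2 g⁻¹) key with hc | hc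
    · left
      have := Set.smul_set_mono (a := g) hc
      rwa [smul_inv_smul] at this
    · right
      have := Set.smul_set_mono (a := g) hc
      rwa [smul_inv_smul] at this

/-- If every `g` maps a set into itself, the set is `G`-stable. -/
lemma gstable_of_subset {A : Set R} (h : ∀ g : G, g • A ⊆ A) (g : G) : g • A = A := by
  apply le_antisymm (h g)
  intro x hx
  have : g • (g⁻¹ • x) ∈ g • A := Set.smul_mem_smul_set (h g⁻¹ ⟨x, hx, rfl⟩)
  rwa [smul_inv_smul] at this

/-- Key induction: if all `n`-fold products of elements of a `G`-stable two-sided ideal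
`J` lie in the `G`-prime ideal `I`, then `J ⊆ I`. -/
lemma gPrime_key {I : Set R} (hI : IsGPrime G R I) :
    ∀ (n : ℕ) (J : Set R), IsTwoSidedIdealSet R J → (∀ g : G, g • J = J) →
      (∀ f : Fin n → R, (∀ i, f i ∈ J) → (List.ofFn f).prod ∈ I) → J ⊆ I := by
  obtain ⟨hITI, hIne, hIst, hIpr⟩ := hI
  intro n
  induction n with
  | zero =>
    intro J _ _ hprod
    exfalso
    apply hIne
    have h1 : (1 : R) ∈ I := by simpa using hprod Fin.elim0 (fun i => i.elim0)
    ext x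
    simp only [Set.mem_univ, iff_true]
    simpa using hITI.mul_mem_left x h1
  | succ n ih =>
    intro J hJ hJst hprod
    set B : Set R := {x | ∀ a ∈ J, a * x ∈ I} with hBdef
    have hBTI : IsTwoSidedIdealSet R B := by
      constructor
      · intro a _; simpa using hITI.zero_mem
      · intro x y hx hy a ha
        rw [mul_add]
        exact hITI.add_mem (hx a ha) (hy a ha)
      · intro x hx a ha
        rw [mul_neg]
        exact hITI.neg_mem (hx a ha)
      · intro r x hx a ha
        rw [← mul_assoc]
        exact hx _ (hJ.mul_mem_right r ha)
      · intro r x hx a ha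
        rw [← mul_assoc]
        exact hITI.mul_mem_right r (hx a ha)
    have hBst : ∀ g : G, g • B = B := by
      apply gstable_of_subset
      rintro g x ⟨y, hy, rfl⟩
      intro a ha
      have ha' : g⁻¹ • a ∈ J := by rw [← hJst g⁻¹]; exact Set.smul_mem_smul_set ha
      have : g • (g⁻¹ • a * y) ∈ g • I := Set.smul_mem_smul_set (hy _ ha')
      rw [smul_mul', smul_inv_smul, hIst g] at this
      exact this
    rcases hIpr J B hJ hBTI hJst hBst (fun a ha b hb => hb a ha) with hc | hc
    · exact hc
    · apply ih J hJ hJst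
      intro f hf
      apply hc
      intro a ha
      have := hprod (Fin.cons a f) (by
        intro i
        refine Fin.cases ?_ ?_ i
        · simpa using ha
        · intro j; simpa using hf j)
      rw [List.ofFn_succ, Fin.cons_zero, List.prod_cons] at this
      simpa [Fin.cons_succ] using this

end Aux

/-- if every two-sided ideal of `R` contains a finite product of primes
containing it, then every `G`-prime ideal of `R` is semiprime, i.e. an intersection
of prime ideals. -/
theorem gPrime_semiprime {G R : Type*} [Group G] [Ring R] [MulSemiringAction G R]
    (hNoeth : ∀ A : Set R, IsTwoSidedIdealSet R A →
      ∃ (n : ℕ) (Ps : Fin n → Set R), (∀ i, IsPrimeTI R (Ps i)) ∧ (∀ i, A ⊆ Ps i) ∧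
        ∀ f : Fin n → R, (∀ i, f i ∈ Ps i) → (List.ofFn f).prod ∈ A)
    (I : Set R) (hI : IsGPrime G R I) :
    ∃ S : Set (Set R), (∀ P ∈ S, IsPrimeTI R P) ∧ I = ⋂₀ S := by
  obtain ⟨hITI, hIne, hIst, hIpr⟩ := hI
  refine ⟨{P | IsPrimeTI R P ∧ I ⊆ P}, fun P hP => hP.1, ?_⟩
  set S : Set (Set R) := {P | IsPrimeTI R P ∧ I ⊆ P} with hSdef
  set J : Set R := ⋂₀ S with hJdef
  have hmemJ : ∀ x : R, x ∈ J ↔ ∀ P ∈ S, x ∈ P := fun x => Set.mem_sInter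
  have hIJ : I ⊆ J := fun x hx => (hmemJ x).2 fun P hP => hP.2 hx
  -- J is a two-sided ideal
  have hJTI : IsTwoSidedIdealSet R J := by
    constructor
    · exact (hmemJ 0).2 fun P hP => hP.1.1.zero_mem
    · intro a b ha hb
      exact (hmemJ _).2 fun P hP => hP.1.1.add_mem ((hmemJ a).1 ha P hP) ((hmemJ b).1 hb P hP)
    · intro a ha
      exact (hmemJ _).2 fun P hP => hP.1.1.neg_mem ((hmemJ a).1 ha P hP)
    · intro r a ha
      exact (hmemJ _).2 fun P hP => hP.1.1.mul_mem_left r ((hmemJ a).1 ha P hP)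
    · intro r a ha
      exact (hmemJ _).2 fun P hP => hP.1.1.mul_mem_right r ((hmemJ a).1 ha P hP)
  -- J is G-stable
  have hJst : ∀ g : G, g • J = J := by
    apply gstable_of_subset
    rintro g x ⟨y, hy, rfl⟩
    refine (hmemJ _).2 fun P hP => ?_
    have hP' : g⁻¹ • P ∈ S := by
      refine ⟨hP.1.smul_s2 g⁻¹, ?_⟩
      calc I = g⁻¹ • I := (hIst g⁻¹).symm
        _ ⊆ g⁻¹ • P := Set.smul_set_mono hP.2
    have : g • y ∈ g • (g⁻¹ • P) := Set.smul_mem_smul_set ((hmemJ y).1 hy _ hP')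
    rwa [smul_inv_smul] at this
  -- conclude via the key induction
  apply le_antisymm hIJ
  obtain ⟨n, Ps, hPsPrime, hPsSub, hPsProd⟩ := hNoeth I hITI
  apply gPrime_key ⟨hITI, hIne, hIst, hIpr⟩ n J hJTI hJst
  intro f hf
  exact hPsProd f fun i => (hmemJ (f i)).1 (hf i) (Ps i) ⟨hPsPrime i, hPsSub i⟩
end

section
/- Let k be an algebraically closed field, Λ a finitely generated free abelian group, and Z a Λ-graded commutative affine domain over k with dim_k Z_λ ≤ 1 for all λ ∈ Λ. Then Z has only finitely many Λ-graded (homogeneous) prime ideals. -/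
/-!
Choose finitely many homogeneous generators `T` of `Z`. A nonzero element of `Z_λ` lies in the
span of the monomials in `T` of degree `λ`, so one of these monomials is nonzero, and since
`dim Z_λ ≤ 1` the element and the monomial are nonzero scalar multiples of each other. A monomial
lies in a prime ideal exactly when one of its factors does, so a homogeneous prime `I` is
determined by `T ∩ I`, and there are at most `2 ^ |T|` of them.
-/

open SetLike DirectSum

section Graded

variable {ι R A : Type*} [DecidableEq ι] [AddMonoid ι] [CommSemiring R] [Semiring A]
  [Algebra R A] (𝒜 : ι → Submodule R A) [GradedAlgebra 𝒜]

theorem GradedAlgebra.exists_finset_isHomogeneousElem_adjoin_eq_top [Algebra.FiniteType R A] :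
    ∃ T : Finset A, (∀ t ∈ T, IsHomogeneousElem 𝒜 t) ∧ Algebra.adjoin R (T : Set A) = ⊤ := by
  classical
  obtain ⟨S, hS⟩ := Algebra.FiniteType.out (R := R) (A := A)
  refine ⟨S.biUnion fun s ↦ (decompose 𝒜 s).support.image fun i ↦ (decompose 𝒜 s i : A),
    ?_, ?_⟩
  · simp only [Finset.mem_biUnion, Finset.mem_image]
    rintro _ ⟨s, -, i, -, rfl⟩
    exact ⟨i, SetLike.coe_mem _⟩
  · rw [← top_le_iff, ← hS, Algebra.adjoin_le_iff]
    intro s hs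
    rw [← sum_support_decompose 𝒜 s]
    exact sum_mem fun i hi ↦
      Algebra.subset_adjoin (Finset.mem_biUnion.mpr ⟨s, hs, Finset.mem_image_of_mem _ hi⟩)

variable {𝒜}

theorem GradedAlgebra.exists_mem_graded_ne_zero_of_mem_span {M : Set A}
    (hM : ∀ m ∈ M, IsHomogeneousElem 𝒜 m) {i : ι} {x : A} (hx : x ∈ 𝒜 i) (hx0 : x ≠ 0)
    (hxM : x ∈ Submodule.span R M) : ∃ m ∈ M, m ∈ 𝒜 i ∧ m ≠ 0 := by
  by_contra! h
  have hproj : GradedAlgebra.proj 𝒜 i '' M ⊆ {0} := by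
    rintro _ ⟨m, hm, rfl⟩
    obtain ⟨j, hj⟩ := hM m hm
    rw [Set.mem_singleton_iff, GradedAlgebra.proj_apply]
    by_cases hji : j = i
    · subst hji
      rw [decompose_of_mem_same 𝒜 hj]
      exact h m hm hj
    · rw [decompose_of_mem_ne 𝒜 hj hji]
  have hx_proj : x ∈ Submodule.span R (GradedAlgebra.proj 𝒜 i '' M) := by
    rw [Submodule.span_image]
    exact ⟨x, hxM, by rw [GradedAlgebra.proj_apply, decompose_of_mem_same 𝒜 hx]⟩
  exact hx0 (by simpa using Submodule.span_mono hproj hx_proj)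

end Graded

theorem Submodule.le_span_singleton_of_rank_le_one {K V : Type*} [Field K] [AddCommGroup V]
    [Module K V] {W : Submodule K V} (hW : Module.rank K W ≤ 1) {x : V} (hx : x ∈ W)
    (hx0 : x ≠ 0) : W ≤ K ∙ x := by
  obtain ⟨v, hWv⟩ := (rank_submodule_le_one_iff' W).mp hW
  obtain ⟨a, rfl⟩ := Submodule.mem_span_singleton.mp (hWv hx)
  have ha : a ≠ 0 := by rintro rfl; simp at hx0
  refine hWv.trans (Submodule.span_singleton_le_iff_mem _ _ |>.mpr ?_)
  exact Submodule.mem_span_singleton.mpr ⟨a⁻¹, by rw [smul_smul, inv_mul_cancel₀ ha, one_smul]⟩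

theorem Ideal.IsPrime.exists_mem_dvd_of_mem_closure {A : Type*} [CommSemiring A] {I : Ideal A}
    (hI : I.IsPrime) {T : Set A} {m : A} (hm : m ∈ Submonoid.closure T) (hmI : m ∈ I) :
    ∃ t ∈ T, t ∈ I ∧ t ∣ m := by
  obtain ⟨l, hlT, rfl⟩ := Submonoid.exists_multiset_of_mem_closure hm
  obtain ⟨t, htl, htI⟩ := (hI.multiset_prod_mem_iff_exists_mem l).mp hmI
  exact ⟨t, hlT t htl, htI, Multiset.dvd_prod htl⟩

section MultiplicityFree

variable {ι K A : Type*} [DecidableEq ι] [AddMonoid ι] [Field K] [CommRing A] [Algebra K A]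
  {𝒜 : ι → Submodule K A} [GradedAlgebra 𝒜] {T : Set A}

theorem GradedAlgebra.exists_mem_closure_smul_eq_of_rank_le_one
    (hrank : ∀ i, Module.rank K (𝒜 i) ≤ 1) (hT : ∀ t ∈ T, IsHomogeneousElem 𝒜 t)
    (hTgen : Algebra.adjoin K T = ⊤) {i : ι} {x : A} (hx : x ∈ 𝒜 i) (hx0 : x ≠ 0) :
    ∃ m ∈ Submonoid.closure T, m ∈ K ∙ x ∧ x ∈ K ∙ m := by
  have hx_span : x ∈ Submodule.span K (Submonoid.closure T : Set A) := by
    rw [← Algebra.adjoin_eq_span, hTgen]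
    exact Submodule.mem_top
  have hclosure : ∀ m ∈ (Submonoid.closure T : Set A), IsHomogeneousElem 𝒜 m :=
    (Submonoid.closure_le (S := homogeneousSubmonoid 𝒜)).mpr hT
  obtain ⟨m, hmT, hm, hm0⟩ := exists_mem_graded_ne_zero_of_mem_span hclosure hx hx0 hx_span
  exact ⟨m, hmT, Submodule.le_span_singleton_of_rank_le_one (hrank i) hx hx0 hm,
    Submodule.le_span_singleton_of_rank_le_one (hrank i) hm hm0 hx⟩

theorem Ideal.IsHomogeneous.le_of_inter_subset (hrank : ∀ i, Module.rank K (𝒜 i) ≤ 1)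
    (hT : ∀ t ∈ T, IsHomogeneousElem 𝒜 t) (hTgen : Algebra.adjoin K T = ⊤) {I J : Ideal A}
    (hIh : I.IsHomogeneous 𝒜) (hI : I.IsPrime) (hIJ : T ∩ I ⊆ J) : I ≤ J := by
  rw [← hIh.toIdeal_homogeneousCore_eq_self]
  refine Ideal.span_le.mpr ?_
  rintro _ ⟨⟨x, i, hx⟩, hxI, rfl⟩
  by_cases hx0 : x = 0
  · simp [hx0]
  obtain ⟨m, hmT, hmx, hxm⟩ :=
    GradedAlgebra.exists_mem_closure_smul_eq_of_rank_le_one hrank hT hTgen hx hx0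
  have hmI : m ∈ I := (Submodule.span_singleton_le_iff_mem x (I.restrictScalars K)).mpr hxI hmx
  obtain ⟨t, htT, htI, htm⟩ := hI.exists_mem_dvd_of_mem_closure hmT hmI
  have hmJ : m ∈ J := J.mem_of_dvd htm (hIJ ⟨htT, htI⟩)
  exact (Submodule.span_singleton_le_iff_mem m (J.restrictScalars K)).mpr hmJ hxm

end MultiplicityFree

theorem finite_homogeneous_primes_of_multiplicity_free_general
    {k Λ Z : Type*} [Field k]
    [AddCommGroup Λ] [DecidableEq Λ]
    [CommRing Z] [Algebra k Z] [Algebra.FiniteType k Z]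
    (𝒜 : Λ → Submodule k Z) [GradedAlgebra 𝒜]
    (hrank : ∀ lam : Λ, Module.rank k (𝒜 lam) ≤ 1) :
    {I : Ideal Z | I.IsPrime ∧ Ideal.IsHomogeneous 𝒜 I}.Finite := by
  obtain ⟨T, hT, hTgen⟩ := GradedAlgebra.exists_finset_isHomogeneousElem_adjoin_eq_top 𝒜
  refine Set.Finite.of_injOn (f := fun I : Ideal Z ↦ (T : Set Z) ∩ I)
    (fun _ _ ↦ Set.inter_subset_left) ?_ T.finite_toSet.finite_subsets
  rintro I ⟨hI, hIh⟩ J ⟨hJ, hJh⟩ (hIJ : (T : Set Z) ∩ I = (T : Set Z) ∩ J)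
  exact le_antisymm (hIh.le_of_inter_subset hrank hT hTgen hI (hIJ ▸ Set.inter_subset_right))
    (hJh.le_of_inter_subset hrank hT hTgen hJ (hIJ ▸ Set.inter_subset_right))

/-- commutative torus case of the main theorem: let `k` be an
algebraically closed field, `Λ` a finitely generated free abelian group, and
`Z` an affine (finitely generated) commutative domain over `k`, graded by `Λ`
with `dim_k Z_λ ≤ 1` for all `λ` (multiplicity-free grading).  Then `Z` has
only finitely many homogeneous (graded) prime ideals. -/
theorem finite_homogeneous_primes_of_multiplicity_free
    {k Λ Z : Type*} [Field k] [IsAlgClosed k]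
    [AddCommGroup Λ] [DecidableEq Λ] [Module.Free ℤ Λ] [Module.Finite ℤ Λ]
    [CommRing Z] [IsDomain Z] [Algebra k Z] [Algebra.FiniteType k Z]
    (𝒜 : Λ → Submodule k Z) [GradedAlgebra 𝒜]
    (hrank : ∀ lam : Λ, Module.rank k (𝒜 lam) ≤ 1) :
    {I : Ideal Z | I.IsPrime ∧ Ideal.IsHomogeneous 𝒜 I}.Finite :=
  finite_homogeneous_primes_of_multiplicity_free_general 𝒜 hrank
end
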